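/- Let G be a finite simple graph on a vertex type V and H a finite simple graph on a vertex type W, and let G ⊍ H denote their disjoint union: the simple graph on the sum type V ⊕ W in which two vertices are adjacent if and only if they are both in V and adjacent in G, or both in W and adjacent in H. If σ(G,x) and σ(H,x) have only real roots, then σ(G ⊍ H, x) has only real roots. -/

import Mathlib

open Polynomial

/-- `numIndepPartitions G i` is the number of partitions of the vertex set of `G` into
exactly `i` nonempty independent sets, encoded as the number of setoids (equivalence
relations) on `V` with exactly `i` equivalence classes, each class being an independent
set of `G`. -/
noncomputable def numIndepPartitions {V : Type*} (G : SimpleGraph V) (i : ℕ) : ℕ :=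
  Nat.card {P : Setoid V // Nat.card (Quotient P) = i ∧
    ∀ c ∈ P.classes, c.Pairwise fun u v => ¬ G.Adj u v}

/-- The σ-polynomial of a finite simple graph `G`: `σ(G,x) = ∑ aᵢ xⁱ` where `aᵢ` is the
number of partitions of the vertex set of `G` into `i` nonempty independent sets. -/
noncomputable def sigmaPoly {V : Type*} [Finite V] (G : SimpleGraph V) : Polynomial ℝ :=
  ∑ i ∈ Finset.range (Nat.card V + 1), (numIndepPartitions G i : ℝ) • X ^ i


/-- The disjoint union of two simple graphs. -/
def graphDisjUnion {V W : Type*} (G : SimpleGraph V) (H : SimpleGraph W) : SimpleGraph (V ⊕ W) where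
  Adj a b :=
    match a, b with
    | Sum.inl u, Sum.inl v => G.Adj u v
    | Sum.inr u, Sum.inr v => H.Adj u v
    | _, _ => False
  symm := ⟨by rintro (u | u) (v | v) h <;> simp_all [SimpleGraph.adj_comm]⟩
  loopless := ⟨by rintro (u | u) h <;> simp_all⟩

/-!
Write `Φ` for the linear map `xⁱ ↦ (x)ᵢ = x(x-1)⋯(x-i+1)`. Grouping the proper `k`-colourings of a
graph by their partition into colour classes shows that `Φ σ(G)` is the chromatic polynomial of `G`,
so `Φ σ(G ⊍ H) = Φ σ(G) · Φ σ(H)`. As `Φ` carries `x (1 + d/dx)` to multiplication by `x`, one gets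
`Φ (xⁱ (1 + d/dx)ⁱ g) = (x)ᵢ Φ g`, hence `σ(G ⊍ H) = ∑ᵢ aᵢ xⁱ (1 + d/dx)ⁱ σ(H)`, the `aᵢ` being the
coefficients of `σ(G)`.

At a point `z` this is the value at `z` of `f(z (1 + d/dx)) g`, where `f = σ(G)` and `g = σ(H)`.
Since `f` has nonnegative coefficients its roots `r` are `≤ 0`, and for `Im z > 0` each factor
`z (1 + d/dx) - r` keeps a polynomial free of zeros in the upper half-plane, because there the
logarithmic derivative `P'/P = ∑ 1/(w - ρ)` has negative imaginary part. So `σ(G ⊍ H)` has no zeros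
with `Im > 0`, nor, having real coefficients, with `Im < 0`.
-/

namespace Polynomial

section FallingFactorial

variable {R : Type*} [CommRing R]

variable (R) in
noncomputable def oneAddDerivative : Module.End R R[X] := 1 + derivative

theorem oneAddDerivative_apply (p : R[X]) : oneAddDerivative R p = p + derivative p := rfl

theorem map_oneAddDerivative_pow {S : Type*} [CommRing S] (φ : R →+* S) (i : ℕ) (p : R[X]) :
    ((oneAddDerivative R ^ i) p).map φ = (oneAddDerivative S ^ i) (p.map φ) := by
  induction i with
  | zero => rfl
  | succ i ih =>
    rw [pow_succ', pow_succ', Module.End.mul_apply, Module.End.mul_apply, oneAddDerivative_apply,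
      oneAddDerivative_apply, Polynomial.map_add, ← derivative_map, ih]

theorem X_mul_oneAddDerivative_X_pow_mul (i : ℕ) (h : R[X]) :
    X * oneAddDerivative R (X ^ i * h)
      = X ^ (i + 1) * oneAddDerivative R h + i • (X ^ i * h) := by
  rw [oneAddDerivative_apply, oneAddDerivative_apply]
  rcases i with _ | i
  · simp
  · rw [derivative_mul, derivative_X_pow, C_eq_natCast, nsmul_eq_mul, Nat.add_sub_cancel]
    ring

noncomputable def descPochhammerMap : R[X] →ₗ[R] R[X] :=
  lsum fun i => LinearMap.toSpanSingleton R R[X] (descPochhammer R i)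

theorem descPochhammerMap_monomial (i : ℕ) (a : R) :
    descPochhammerMap (monomial i a) = a • descPochhammer R i := by
  simp [descPochhammerMap]

theorem descPochhammerMap_X_pow (i : ℕ) :
    descPochhammerMap (X ^ i : R[X]) = descPochhammer R i := by
  rw [← monomial_one_right_eq_X_pow, descPochhammerMap_monomial, one_smul]

theorem descPochhammerMap_X_mul_oneAddDerivative (p : R[X]) :
    descPochhammerMap (X * oneAddDerivative R p) = X * descPochhammerMap p := by
  induction p using Polynomial.induction_on' with
  | add p q hp hq => rw [map_add, mul_add, map_add, hp, hq, map_add, mul_add]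
  | monomial i a =>
    -- `X (1 + d/dX) Xⁱ = Xⁱ⁺¹ + i Xⁱ` and `(x)ᵢ₊₁ + i (x)ᵢ = x (x)ᵢ`
    have h := X_mul_oneAddDerivative_X_pow_mul i (1 : R[X])
    rw [mul_one, oneAddDerivative_apply 1, derivative_one, add_zero, mul_one] at h
    rw [← smul_X_eq_monomial, map_smul, mul_smul_comm, map_smul, h, map_smul, mul_smul_comm,
      map_add, map_nsmul, descPochhammerMap_X_pow, descPochhammerMap_X_pow,
      descPochhammer_succ_right, nsmul_eq_mul]
    congr 1
    ring

theorem descPochhammerMap_X_pow_mul_oneAddDerivative_pow (i : ℕ) (p : R[X]) :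
    descPochhammerMap (X ^ i * (oneAddDerivative R ^ i) p)
      = descPochhammer R i * descPochhammerMap p := by
  induction i with
  | zero => simp
  | succ i ih =>
    -- `Xⁱ⁺¹ Eⁱ⁺¹ p = X E (Xⁱ Eⁱ p) - i Xⁱ Eⁱ p` for `E = 1 + d/dX`, and `(x)ᵢ₊₁ = (x)ᵢ (x - i)`
    have h := congrArg descPochhammerMap
      (X_mul_oneAddDerivative_X_pow_mul i ((oneAddDerivative R ^ i) p))
    rw [← Module.End.mul_apply, ← pow_succ', map_add, map_nsmul,
      descPochhammerMap_X_mul_oneAddDerivative, ih] at h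
    rw [eq_sub_of_add_eq h.symm, descPochhammer_succ_right, nsmul_eq_mul]
    ring

theorem coeff_descPochhammerMap_natDegree [IsDomain R] (p : R[X]) :
    (descPochhammerMap p).coeff p.natDegree = p.leadingCoeff := by
  set n := p.natDegree
  conv_lhs => rw [p.as_sum_range' (n + 1) (Nat.lt_succ_self _)]
  rw [map_sum, finsetSum_coeff, Finset.sum_eq_single n]
  · have h := (monic_descPochhammer R n).coeff_natDegree
    rw [descPochhammer_natDegree] at h
    rw [descPochhammerMap_monomial, coeff_smul, h, smul_eq_mul, mul_one, leadingCoeff]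
  · intro i hi hne
    have hi : (descPochhammer R i).natDegree < n := by
      rw [descPochhammer_natDegree]
      exact lt_of_le_of_ne (Finset.mem_range_succ_iff.1 hi) hne
    rw [descPochhammerMap_monomial, coeff_smul, coeff_eq_zero_of_natDegree_lt hi, smul_zero]
  · exact fun h => absurd (Finset.self_mem_range_succ _) h

theorem descPochhammerMap_injective [IsDomain R] :
    Function.Injective (descPochhammerMap : R[X] →ₗ[R] R[X]) := by
  refine (injective_iff_map_eq_zero _).2 fun p hp => ?_
  rw [← leadingCoeff_eq_zero, ← coeff_descPochhammerMap_natDegree, hp, coeff_zero]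

noncomputable def fallingMul (f g : R[X]) : R[X] :=
  f.sum fun i a => a • (X ^ i * (oneAddDerivative R ^ i) g)

theorem fallingMul_add_left (f₁ f₂ g : R[X]) :
    fallingMul (f₁ + f₂) g = fallingMul f₁ g + fallingMul f₂ g :=
  sum_add_index _ _ _ (fun _ => zero_smul _ _) fun _ _ _ => add_smul _ _ _

theorem fallingMul_monomial_left (i : ℕ) (a : R) (g : R[X]) :
    fallingMul (monomial i a) g = a • (X ^ i * (oneAddDerivative R ^ i) g) :=
  sum_monomial_index _ _ (zero_smul _ _)

@[simp]
theorem fallingMul_zero_left (g : R[X]) : fallingMul 0 g = 0 := sum_zero_index _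

@[simp]
theorem fallingMul_zero_right (f : R[X]) : fallingMul f 0 = 0 := by
  simp [fallingMul, Polynomial.sum]

theorem descPochhammerMap_fallingMul (f g : R[X]) :
    descPochhammerMap (fallingMul f g) = descPochhammerMap f * descPochhammerMap g := by
  induction f using Polynomial.induction_on' with
  | add f₁ f₂ h₁ h₂ => rw [fallingMul_add_left, map_add, map_add, h₁, h₂, add_mul]
  | monomial i a =>
    rw [fallingMul_monomial_left, map_smul, descPochhammerMap_X_pow_mul_oneAddDerivative_pow,
      descPochhammerMap_monomial, smul_mul_assoc]

theorem map_fallingMul {S : Type*} [CommRing S] (φ : R →+* S) (f g : R[X]) :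
    (fallingMul f g).map φ = fallingMul (f.map φ) (g.map φ) := by
  induction f using Polynomial.induction_on' with
  | add f₁ f₂ h₁ h₂ =>
    rw [fallingMul_add_left, Polynomial.map_add, Polynomial.map_add, h₁, h₂, fallingMul_add_left]
  | monomial i a =>
    rw [fallingMul_monomial_left, map_monomial, fallingMul_monomial_left, Polynomial.map_smul,
      Polynomial.map_mul, Polynomial.map_pow, map_X, map_oneAddDerivative_pow]

theorem eval_fallingMul (f g : R[X]) (z : R) :
    (fallingMul f g).eval z = (aeval (z • oneAddDerivative R) f g).eval z := by
  induction f using Polynomial.induction_on' with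
  | add f₁ f₂ h₁ h₂ =>
    rw [fallingMul_add_left, map_add, LinearMap.add_apply, eval_add, eval_add, h₁, h₂]
  | monomial i a =>
    rw [fallingMul_monomial_left, aeval_monomial, Module.End.mul_apply,
      Module.algebraMap_end_apply, _root_.smul_pow, LinearMap.smul_apply]
    simp only [eval_smul, eval_mul, eval_pow, eval_X, smul_eq_mul]

end FallingFactorial

theorem nonpos_of_mem_roots_of_coeff_nonneg {R : Type*} [CommRing R] [LinearOrder R]
    [IsStrictOrderedRing R] {p : R[X]} (hp : ∀ i, 0 ≤ p.coeff i) {r : R} (hr : r ∈ p.roots) :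
    r ≤ 0 := by
  by_contra! hr0
  have hlead : 0 < p.leadingCoeff :=
    (hp _).lt_of_ne' (leadingCoeff_ne_zero.2 (ne_zero_of_mem_roots hr))
  have heval : 0 < p.eval r := by
    rw [eval_eq_sum_range]
    exact Finset.sum_pos' (fun i _ => mul_nonneg (hp i) (pow_nonneg hr0.le i))
      ⟨p.natDegree, Finset.self_mem_range_succ _, mul_pos hlead (pow_pos hr0 _)⟩
  exact heval.ne' (isRoot_of_mem_roots hr)

section Stable

def IsStable (p : ℂ[X]) : Prop := ∀ z : ℂ, 0 < z.im → p.eval z ≠ 0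

theorem IsStable.im_eval_derivative_div_eval_neg {P : ℂ[X]} (hP : P.IsStable)
    (hdeg : P.natDegree ≠ 0) {w : ℂ} (hw : 0 < w.im) :
    (P.derivative.eval w / P.eval w).im < 0 := by
  have hsplit := IsAlgClosed.splits P
  rw [hsplit.eval_derivative_div_eval_of_ne_zero (hP w hw),
    show ∀ s : Multiset ℂ, s.sum.im = (s.map Complex.im).sum from
      map_multiset_sum Complex.imAddGroupHom, Multiset.map_map]
  have hneg : ∀ ρ ∈ P.roots, (Complex.im ∘ fun z => 1 / (w - z)) ρ < (0 : ℂ → ℝ) ρ := by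
    intro ρ hρ
    have hρ : ρ.im ≤ 0 := not_lt.1 fun h => hP ρ h (isRoot_of_mem_roots hρ)
    have hpos : 0 < (w - ρ).im := by rw [Complex.sub_im]; linarith
    simp only [Function.comp_apply, one_div, Complex.inv_im, Pi.zero_apply]
    exact div_neg_of_neg_of_pos (neg_neg_of_pos hpos)
      (Complex.normSq_pos.2 fun h => by simp [h] at hpos)
  simpa using Multiset.sum_lt_sum_of_nonempty (hsplit.roots_ne_zero hdeg) hneg

theorem IsStable.aeval_X_sub_C {P : ℂ[X]} (hP : P.IsStable) {y : ℂ} (hy : 0 < y.im) {r : ℝ}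
    (hr : r ≤ 0) : (aeval (y • oneAddDerivative ℂ) (X - C (algebraMap ℝ ℂ r)) P).IsStable := by
  intro w hw
  set L := P.derivative.eval w / P.eval w
  have heval : (aeval (y • oneAddDerivative ℂ) (X - C (algebraMap ℝ ℂ r)) P).eval w
      = P.eval w * (y * (1 + L) - r) := by
    simp only [map_sub, aeval_X, aeval_C, LinearMap.sub_apply, LinearMap.smul_apply,
      Module.algebraMap_end_apply, oneAddDerivative_apply, eval_sub, eval_smul, eval_add,
      smul_eq_mul, L, Complex.coe_algebraMap]
    field_simp [hP w hw]
  rw [heval]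
  refine mul_ne_zero (hP w hw) fun h => ?_
  have hre := congrArg Complex.re h
  have him := congrArg Complex.im h
  simp only [Complex.sub_re, Complex.mul_re, Complex.add_re, Complex.one_re, Complex.add_im,
    Complex.one_im, Complex.ofReal_re, Complex.zero_re, Complex.sub_im, Complex.mul_im,
    Complex.ofReal_im, Complex.zero_im] at hre him
  rcases eq_or_ne P.natDegree 0 with hdeg | hdeg
  · have hL : L = 0 := by simp [L, derivative_of_natDegree_zero hdeg]
    simp only [hL, Complex.zero_re, Complex.zero_im] at him
    linarith
  · -- `y (1 + L) = r` with `r ≤ 0` would force `Im L ≥ 0`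
    have hL : L.im < 0 := hP.im_eval_derivative_div_eval_neg hdeg hw
    have hkey : (y.re ^ 2 + y.im ^ 2) * L.im = -(y.im * r) := by
      linear_combination y.re * him - y.im * hre
    nlinarith [mul_pos (by positivity : 0 < y.re ^ 2 + y.im ^ 2) (neg_pos.2 hL)]

theorem IsStable.aeval_prod_X_sub_C {P : ℂ[X]} (hP : P.IsStable) {y : ℂ} (hy : 0 < y.im)
    {s : Multiset ℝ} (hs : ∀ r ∈ s, r ≤ 0) :
    (aeval (y • oneAddDerivative ℂ) (s.map fun r => X - C (algebraMap ℝ ℂ r)).prod P).IsStable := by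
  induction s using Multiset.induction with
  | empty => simpa using hP
  | cons r s ih =>
    rw [Multiset.map_cons, Multiset.prod_cons, map_mul, Module.End.mul_apply]
    exact (ih fun r' h => hs r' (Multiset.mem_cons_of_mem h)).aeval_X_sub_C hy
      (hs r (Multiset.mem_cons_self r s))

theorem IsStable.aeval_map_of_splits {P : ℂ[X]} (hP : P.IsStable) {y : ℂ} (hy : 0 < y.im)
    {f : ℝ[X]} (hf : f.Splits) (hf0 : f ≠ 0) (hroots : ∀ r ∈ f.roots, r ≤ 0) :
    (aeval (y • oneAddDerivative ℂ) (f.map (algebraMap ℝ ℂ)) P).IsStable := by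
  rw [hf.eq_prod_roots, Polynomial.map_mul, map_C, Polynomial.map_multiset_prod, Multiset.map_map,
    map_mul, aeval_C, Module.End.mul_apply, Module.algebraMap_end_apply]
  have hfactors : f.roots.map (Polynomial.map (algebraMap ℝ ℂ) ∘ fun r => X - C r)
      = f.roots.map fun r => X - C (algebraMap ℝ ℂ r) :=
    Multiset.map_congr rfl fun r _ => by simp
  intro z hz
  rw [hfactors, eval_smul, smul_eq_mul]
  exact mul_ne_zero (by simpa using hf0) (hP.aeval_prod_X_sub_C hy hroots z hz)

theorem isStable_map_of_splits {g : ℝ[X]} (hg : g.Splits) (hg0 : g ≠ 0) :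
    (g.map (algebraMap ℝ ℂ)).IsStable := by
  intro z hz hzero
  obtain ⟨x, rfl⟩ := hg.mem_range_of_isRoot hg0 hzero
  simp at hz

theorem splits_of_isStable_map {p : ℝ[X]} (hp : (p.map (algebraMap ℝ ℂ)).IsStable) :
    p.Splits := by
  refine Splits.of_splits_map (algebraMap ℝ ℂ) (IsAlgClosed.splits _) fun a ha => ?_
  have hroot : (p.map (algebraMap ℝ ℂ)).eval a = 0 := isRoot_of_mem_roots ha
  have him : a.im = 0 := by
    rcases lt_trichotomy a.im 0 with h | h | h
    · refine absurd ?_ (hp (starRingEnd ℂ a) (by simpa using h))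
      rw [eval_map_algebraMap] at hroot ⊢
      rw [← Complex.conjAe_coe, aeval_algHom_apply, hroot, map_zero]
    · exact h
    · exact absurd hroot (hp a h)
  exact ⟨a.re, Complex.ext (by simp) (by simp [him])⟩

theorem Splits.fallingMul {f g : ℝ[X]} (hf : f.Splits) (hg : g.Splits)
    (hroots : ∀ r ∈ f.roots, r ≤ 0) : (fallingMul f g).Splits := by
  rcases eq_or_ne f 0 with rfl | hf0
  · simp
  rcases eq_or_ne g 0 with rfl | hg0
  · simp
  refine splits_of_isStable_map fun z hz => ?_
  rw [map_fallingMul, eval_fallingMul]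
  exact (isStable_map_of_splits hg hg0).aeval_map_of_splits hz hf hf0 hroots z hz

end Stable

end Polynomial

instance Setoid.finite {α : Type*} [Finite α] : Finite (Setoid α) :=
  Finite.of_injective (fun s : Setoid α => s.r) fun _ _ h =>
    Setoid.ext fun a b => iff_of_eq (congrFun₂ h a b)

namespace SimpleGraph

variable {V : Type*} (G : SimpleGraph V)

def IsIndepPartition (P : Setoid V) : Prop :=
  ∀ c ∈ P.classes, c.Pairwise fun u v => ¬ G.Adj u v

variable {G} in
theorem isIndepPartition_iff {P : Setoid V} :
    G.IsIndepPartition P ↔ ∀ u v, P u v → ¬ G.Adj u v := by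
  refine ⟨fun h u v huv hadj => ?_, ?_⟩
  · exact h _ (P.mem_classes v) huv (P.refl v) (G.ne_of_adj hadj) hadj
  · rintro h c ⟨y, rfl⟩ u hu v hv -
    exact h u v (P.trans hu (P.symm hv))

def coloringOfIndepPartition (α : Type*) :
    (Σ P : {P : Setoid V // G.IsIndepPartition P}, Quotient P.1 ↪ α) → G.Coloring α :=
  fun x => Coloring.mk (fun v => x.2 (Quotient.mk _ v)) fun {u v} hadj heq =>
    isIndepPartition_iff.1 x.1.2 u v (Quotient.exact (x.2.injective heq)) hadj

theorem coloringOfIndepPartition_bijective (α : Type*) :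
    Function.Bijective (G.coloringOfIndepPartition α) := by
  refine ⟨?_, fun c => ?_⟩
  · rintro ⟨⟨P₁, h₁⟩, e₁⟩ ⟨⟨P₂, h₂⟩, e₂⟩ h
    have he : ∀ v, e₁ (Quotient.mk _ v) = e₂ (Quotient.mk _ v) := fun v => DFunLike.congr_fun h v
    obtain rfl : P₁ = P₂ := Setoid.ext fun a b => by
      rw [← Quotient.eq, ← Quotient.eq (r := P₂), ← e₁.injective.eq_iff, ← e₂.injective.eq_iff,
        he, he]
    obtain rfl : e₁ = e₂ := DFunLike.ext _ _ fun q => Quotient.inductionOn q he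
    rfl
  · refine ⟨⟨⟨Setoid.ker c, isIndepPartition_iff.2 fun u v huv hadj => c.valid hadj huv⟩,
      ⟨Setoid.kerLift c, Setoid.kerLift_injective c⟩⟩, rfl⟩

theorem card_coloring_fin [Finite V] (k : ℕ) :
    Nat.card (G.Coloring (Fin k))
      = ∑ i ∈ Finset.range (Nat.card V + 1), numIndepPartitions G i * k.descFactorial i := by
  classical
  have : Fintype {P : Setoid V // G.IsIndepPartition P} := Fintype.ofFinite _
  rw [← Nat.card_congr (Equiv.ofBijective _ (G.coloringOfIndepPartition_bijective (Fin k))),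
    Nat.card_sigma]
  have hcard : ∀ P : {P : Setoid V // G.IsIndepPartition P},
      Nat.card (Quotient P.1 ↪ Fin k) = k.descFactorial (Nat.card (Quotient P.1)) := by
    intro P
    have := Fintype.ofFinite (Quotient P.1)
    rw [Nat.card_eq_fintype_card, Fintype.card_embedding_eq, Fintype.card_fin,
      Nat.card_eq_fintype_card]
  have hmaps : ∀ P ∈ (Finset.univ : Finset {P : Setoid V // G.IsIndepPartition P}),
      Nat.card (Quotient P.1) ∈ Finset.range (Nat.card V + 1) := fun P _ =>
    Finset.mem_range_succ_iff.2 (Nat.card_le_card_of_surjective _ Quotient.mk_surjective)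
  simp_rw [hcard, ← Finset.sum_fiberwise_of_maps_to hmaps]
  refine Finset.sum_congr rfl fun i _ => ?_
  rw [Finset.sum_congr rfl fun P hP => by rw [(Finset.mem_filter.1 hP).2], Finset.sum_const,
    smul_eq_mul, ← Fintype.card_subtype, ← Nat.card_eq_fintype_card, numIndepPartitions]
  exact congrArg (· * _) (Nat.card_congr
    ((Equiv.subtypeSubtypeEquivSubtypeInter G.IsIndepPartition
      (fun P => Nat.card (Quotient P) = i)).trans (Equiv.subtypeEquivRight fun _ => and_comm)))

end SimpleGraph

section SigmaPoly

variable {V W : Type*} [Finite V] [Finite W]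

theorem coeff_sigmaPoly_nonneg (G : SimpleGraph V) (i : ℕ) : 0 ≤ (sigmaPoly G).coeff i := by
  rw [sigmaPoly, finsetSum_coeff]
  refine Finset.sum_nonneg fun j _ => ?_
  rw [coeff_smul, coeff_X_pow, smul_eq_mul]
  split_ifs <;> positivity

theorem eval_descPochhammerMap_sigmaPoly (G : SimpleGraph V) (k : ℕ) :
    (descPochhammerMap (sigmaPoly G)).eval (k : ℝ) = Nat.card (G.Coloring (Fin k)) := by
  rw [G.card_coloring_fin, sigmaPoly, map_sum, eval_finsetSum]
  push_cast
  refine Finset.sum_congr rfl fun i _ => ?_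
  rw [map_smul, descPochhammerMap_X_pow, eval_smul, descPochhammer_eval_eq_descFactorial,
    smul_eq_mul]

theorem descPochhammerMap_sigmaPoly_sum (G : SimpleGraph V) (H : SimpleGraph W) :
    descPochhammerMap (sigmaPoly (G ⊕g H))
      = descPochhammerMap (sigmaPoly G) * descPochhammerMap (sigmaPoly H) := by
  refine eq_of_infinite_eval_eq _ _
    ((Set.infinite_range_of_injective Nat.cast_injective).mono ?_)
  rintro _ ⟨k, rfl⟩
  simp only [Set.mem_ofPred_eq, eval_mul, eval_descPochhammerMap_sigmaPoly,
    Nat.card_congr SimpleGraph.Coloring.sumEquiv, Nat.card_prod, Nat.cast_mul]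

theorem sigmaPoly_sum (G : SimpleGraph V) (H : SimpleGraph W) :
    sigmaPoly (G ⊕g H) = fallingMul (sigmaPoly G) (sigmaPoly H) :=
  descPochhammerMap_injective <| by
    rw [descPochhammerMap_fallingMul, descPochhammerMap_sigmaPoly_sum]

end SigmaPoly

theorem graphDisjUnion_eq_sum {V W : Type*} (G : SimpleGraph V) (H : SimpleGraph W) :
    graphDisjUnion G H = G ⊕g H := by
  ext (u | u) (v | v) <;> simp [graphDisjUnion]

theorem sigmaPoly_disjUnion_splits {V W : Type*} [Finite V] [Finite W]
    (G : SimpleGraph V) (H : SimpleGraph W)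
    (hG : (sigmaPoly G).Splits)
    (hH : (sigmaPoly H).Splits) :
    (sigmaPoly (graphDisjUnion G H)).Splits := by
  rw [graphDisjUnion_eq_sum, sigmaPoly_sum]
  exact hG.fallingMul hH fun r hr =>
    nonpos_of_mem_roots_of_coeff_nonneg (coeff_sigmaPoly_nonneg G) hr
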